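/- Two distinct Baer sublines of PG(2,q²) having a common point and not contained in a common line are contained in a unique Baer subplane. -/

import Mathlib

/-!
A Baer subplane is the set of points spanned by the vectors of an `F`-subspace `V ≤ K³` with
`dim_F V = 3` and `K V = K³`. A Baer subline is the set of points of `F x₁ + F x₂`, where `x₁, x₂`
are independent over `K`. Rescale both sublines so that a single vector `w` represents the common
point. Then `V = L₁ + L₂` has `F`-dimension at most `2 + 2 - 1`, and it spans `K³` because the
points do not lie on one line, so it is a Baer subplane containing both sublines.

Any other such `V'` meets each `K`-subspace `W` in `F`-dimension at most `dim_K W`. For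
`W = K x₁ + K x₂` this gives `μ L₁ ≤ V'` for some `μ ≠ 0`, and similarly `ν L₂ ≤ V'`. For `W = K w`
it gives `μ / ν ∈ F`. Hence `μ V ≤ V'`, and comparing dimensions gives `μ V = V'`.
-/

/-- A Baer subline of `PG(2,q²)`: the image, under a projectivity of the plane, of the
standard `GF(q)`-rational points of the line `z = 0`. -/
def IsBaerSubline (F : Type*) {K : Type*} [Field F] [Field K] [Algebra F K]
    (B : Set (Projectivization K (Fin 3 → K))) : Prop :=
  ∃ g : (Fin 3 → K) ≃ₗ[K] (Fin 3 → K),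
    B = {p | ∃ v : Fin 2 → F, v ≠ 0 ∧
      p.submodule =
        Submodule.span K {g ![algebraMap F K (v 0), algebraMap F K (v 1), 0]}}

/-- A Baer subplane of `PG(2,q²)`: the image, under a projectivity of the plane, of the
standard `GF(q)`-rational points of the plane. -/
def IsBaerSubplane (F : Type*) {K : Type*} [Field F] [Field K] [Algebra F K]
    (B : Set (Projectivization K (Fin 3 → K))) : Prop :=
  ∃ g : (Fin 3 → K) ≃ₗ[K] (Fin 3 → K),
    B = {p | ∃ v : Fin 3 → F, v ≠ 0 ∧
      p.submodule = Submodule.span K {g (fun i => algebraMap F K (v i))}}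

open Module Submodule
open scoped Pointwise

theorem finrank_span_pair {K E : Type*} [Field K] [AddCommGroup E] [Module K E] {x₁ x₂ : E}
    (hx : LinearIndependent K ![x₁, x₂]) : finrank K (span K {x₁, x₂}) = 2 := by
  rw [← Matrix.range_cons_cons_empty, finrank_span_eq_card hx, Fintype.card_fin]

theorem LinearIndependent.pair_smul {K E : Type*} [Field K] [AddCommGroup E] [Module K E]
    {x₁ x₂ : E} (hx : LinearIndependent K ![x₁, x₂]) {l₁ l₂ : K} (hl₁ : l₁ ≠ 0)
    (hl₂ : l₂ ≠ 0) : LinearIndependent K ![l₁ • x₁, l₂ • x₂] := by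
  convert hx.units_smul ![Units.mk0 l₁ hl₁, Units.mk0 l₂ hl₂] using 1
  ext i
  fin_cases i <;> rfl

theorem finrank_eq_two_of_ne_top {K E : Type*} [Field K] [AddCommGroup E] [Module K E]
    [FiniteDimensional K E] (hE : finrank K E = 3) {W : Submodule K E} (hW : W ≠ ⊤) {x₁ x₂ : E}
    (hx : LinearIndependent K ![x₁, x₂]) (hxW : span K {x₁, x₂} ≤ W) : finrank K W = 2 := by
  have := finrank_lt hW
  have := finrank_mono hxW
  rw [finrank_span_pair hx] at this
  omega

section ProjPoints

variable {F K E : Type*} [Field F] [Field K] [AddCommGroup E] [Module K E] [Module F E]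

variable (K) in
def projPoints (V : Submodule F E) : Set (Projectivization K E) :=
  {p | ∃ w ∈ V, w ≠ 0 ∧ p.submodule = K ∙ w}

theorem projPoints_mono {V V' : Submodule F E} (h : V ≤ V') :
    projPoints K V ⊆ projPoints K V' := fun _ ⟨w, hw, hw0, hp⟩ => ⟨w, h hw, hw0, hp⟩

theorem submodule_le_span_of_mem_projPoints {V : Submodule F E} {p : Projectivization K E}
    (hp : p ∈ projPoints K V) : p.submodule ≤ span K (V : Set E) := by
  obtain ⟨w, hw, -, hp⟩ := hp
  rw [hp, span_singleton_le_iff_mem]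
  exact subset_span hw

theorem exists_smul_mem_of_projPoints_subset {L V : Submodule F E}
    (h : projPoints K L ⊆ projPoints K V) {x : E} (hx : x ∈ L) (hx0 : x ≠ 0) :
    ∃ l : K, l ≠ 0 ∧ l • x ∈ V := by
  obtain ⟨w, hw, hw0, hp⟩ := h ⟨x, hx, hx0, Projectivization.submodule_mk x hx0⟩
  rw [Projectivization.submodule_mk] at hp
  have hwx : w ∈ K ∙ x := hp ▸ mem_span_singleton_self w
  obtain ⟨l, rfl⟩ := mem_span_singleton.1 hwx
  exact ⟨l, left_ne_zero_of_smul hw0, hw⟩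

theorem projPoints_range {M : Type*} [AddCommGroup M] [Module F M] {f : M →ₗ[F] E}
    (hf : Function.Injective f) :
    projPoints K (LinearMap.range f) = {p | ∃ v, v ≠ 0 ∧ p.submodule = K ∙ f v} := by
  ext p
  constructor
  · rintro ⟨_, ⟨v, rfl⟩, hw0, hp⟩
    exact ⟨v, fun h => hw0 (by rw [h, map_zero]), hp⟩
  · rintro ⟨v, hv, hp⟩
    exact ⟨f v, ⟨v, rfl⟩, (map_ne_zero_iff f hf).2 hv, hp⟩

variable [Algebra F K] [IsScalarTower F K E]

theorem smul_span_pair (μ : K) (x₁ x₂ : E) :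
    μ • span F {x₁, x₂} = span F {μ • x₁, μ • x₂} := by
  rw [smul_span, Set.smul_set_insert, Set.smul_set_singleton]

theorem finrank_pointwise_smul {V : Submodule F E} {μ : K} (hμ : μ ≠ 0) :
    finrank F ↥(μ • V) = finrank F V := by
  rw [pointwise_smul_def]
  exact ((LinearEquiv.smulOfNeZero K E μ hμ).restrictScalars F).finrank_map_eq V

theorem projPoints_smul {V : Submodule F E} {κ : K} (hκ : κ ≠ 0) :
    projPoints K (κ • V) = projPoints K V := by
  ext p
  constructor
  · rintro ⟨_, hκw, hw0, hp⟩
    obtain ⟨w, hw, rfl⟩ := (mem_smul_pointwise_iff_exists _ _ _).1 hκw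
    exact ⟨w, hw, fun h => hw0 (by rw [h, smul_zero]), by
      rw [hp, span_singleton_smul_eq (IsUnit.mk0 κ hκ)]⟩
  · rintro ⟨w, hw, hw0, hp⟩
    exact ⟨κ • w, smul_mem_pointwise_smul _ _ _ hw, smul_ne_zero hκ hw0, by
      rw [hp, span_singleton_smul_eq (IsUnit.mk0 κ hκ)]⟩

theorem projPoints_eq_of_smul_le {V V' : Submodule F E} [FiniteDimensional F V']
    (hdim : finrank F V' ≤ finrank F V) {μ : K} (hμ : μ ≠ 0) (h : μ • V ≤ V') :
    projPoints K V' = projPoints K V := by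
  rw [← eq_of_le_of_finrank_le h (by rwa [finrank_pointwise_smul hμ]), projPoints_smul hμ]

end ProjPoints

section Forms

variable {F K E : Type*} [Field F] [Field K] [Algebra F K] [AddCommGroup E] [Module K E]
  [Module F E] [IsScalarTower F K E]

theorem finrank_span_le_finrank_of_tower (T : Submodule F E) [FiniteDimensional F T] :
    finrank K (span K (T : Set E)) ≤ finrank F T := by
  let b := Module.finBasis F T
  have hT : span F (Set.range (T.subtype ∘ b)) = T := by
    rw [Set.range_comp, span_image, b.span_eq, map_subtype_top]
  calc finrank K (span K (T : Set E))
      = finrank K (span K (Set.range (T.subtype ∘ b))) := by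
        rw [← span_span_of_tower F K (Set.range _), hT]
    _ ≤ Fintype.card (Fin (finrank F T)) := finrank_range_le_card _
    _ = finrank F T := Fintype.card_fin _

theorem finrank_sup_eq_three {L₁ L₂ : Submodule F E} (h₁ : finrank F L₁ = 2)
    (h₂ : finrank F L₂ = 2) (hL : L₁ ⊓ L₂ ≠ ⊥)
    (hspan : span K ((L₁ ⊔ L₂ : Submodule F E) : Set E) = ⊤) (hE : finrank K E = 3) :
    finrank F ↥(L₁ ⊔ L₂) = 3 := by
  have : FiniteDimensional F L₁ := .of_finrank_pos (by omega)
  have : FiniteDimensional F L₂ := .of_finrank_pos (by omega)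
  have hinf : finrank F ↥(L₁ ⊓ L₂) ≠ 0 := mt finrank_eq_zero.1 hL
  have hsup := finrank_sup_add_finrank_inf_eq L₁ L₂
  have hspan_le := finrank_span_le_finrank_of_tower (K := K) (L₁ ⊔ L₂)
  rw [hspan, finrank_top, hE] at hspan_le
  omega

variable [FiniteDimensional K E]

/-- A complement `T` of `V ⊓ W` in `V` has `dim_K (K T) ≤ dim_F T`, while `K (V ⊓ W) ≤ W` and
`K T` together span `E`. -/
theorem finrank_inf_restrictScalars_le {V : Submodule F E} [FiniteDimensional F V]
    (hspan : span K (V : Set E) = ⊤) (hV : finrank F V ≤ finrank K E) (W : Submodule K E) :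
    finrank F ↥(V ⊓ W.restrictScalars F) ≤ finrank K W := by
  set U := V ⊓ W.restrictScalars F
  obtain ⟨T₀, hT₀⟩ := U.exists_isCompl
  set T := T₀ ⊓ V
  have hUV : U ≤ V := inf_le_left
  have hsup : U ⊔ T = V := by
    rw [← sup_inf_assoc_of_le T₀ hUV, hT₀.sup_eq_top, top_inf_eq]
  have hinf : U ⊓ T = ⊥ := eq_bot_iff.2 fun x hx => hT₀.inf_eq_bot ▸ ⟨hx.1, hx.2.1⟩
  have : FiniteDimensional F U := finiteDimensional_of_le hUV
  have : FiniteDimensional F T := finiteDimensional_of_le inf_le_right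
  have hdim := finrank_sup_add_finrank_inf_eq U T
  rw [hsup, hinf, finrank_bot] at hdim
  have hUW : span K (U : Set E) ≤ W := span_le.2 fun x hx => hx.2
  have hcover : finrank K E ≤ finrank K W + finrank F T := by
    calc finrank K E = finrank K ↥(span K (U : Set E) ⊔ span K (T : Set E)) := by
          rw [← span_union, ← span_span_of_tower F K ((U : Set E) ∪ T), span_union, span_eq,
            span_eq, hsup, hspan, finrank_top]
      _ ≤ finrank K (span K (U : Set E)) + finrank K (span K (T : Set E)) :=
          finrank_add_le_finrank_add_finrank _ _
      _ ≤ finrank K W + finrank F T :=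
          add_le_add (finrank_mono hUW) (finrank_span_le_finrank_of_tower T)
  omega

theorem exists_algebraMap_mul_eq_of_smul_mem {V : Submodule F E} [FiniteDimensional F V]
    (hspan : span K (V : Set E) = ⊤) (hV : finrank F V ≤ finrank K E) {x : E} (hx : x ≠ 0)
    {μ ν : K} (hμ : μ ≠ 0) (hμx : μ • x ∈ V) (hνx : ν • x ∈ V) :
    ∃ c : F, ν = algebraMap F K c * μ := by
  set U := V ⊓ (K ∙ x).restrictScalars F
  have : FiniteDimensional F U := finiteDimensional_of_le inf_le_left
  have hU : finrank F U ≤ 1 :=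
    (finrank_inf_restrictScalars_le hspan hV _).trans (finrank_span_singleton hx).le
  have hμU : μ • x ∈ U := ⟨hμx, smul_mem _ μ (mem_span_singleton_self x)⟩
  have hνU : ν • x ∈ U := ⟨hνx, smul_mem _ ν (mem_span_singleton_self x)⟩
  have hUeq : F ∙ (μ • x) = U := eq_of_le_of_finrank_le ((span_singleton_le_iff_mem _ _).2 hμU)
    (by rwa [finrank_span_singleton (smul_ne_zero hμ hx)])
  obtain ⟨c, hc⟩ := mem_span_singleton.1 (hUeq ▸ hνU : ν • x ∈ F ∙ (μ • x))
  refine ⟨c, smul_left_injective K hx ?_⟩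
  simp only [← hc, mul_smul, algebraMap_smul]

/-- The common scalar is the one that puts `x₁ + x₂` into `V`. -/
theorem exists_smul_span_pair_le {V : Submodule F E} [FiniteDimensional F V]
    (hspan : span K (V : Set E) = ⊤) (hV : finrank F V ≤ finrank K E)
    {x₁ x₂ : E} (hx : LinearIndependent K ![x₁, x₂])
    (h : projPoints K (span F {x₁, x₂}) ⊆ projPoints K V) :
    ∃ μ : K, μ ≠ 0 ∧ μ • span F {x₁, x₂} ≤ V := by
  have hx₁ : x₁ ∈ span F {x₁, x₂} := subset_span (by simp)
  have hx₂ : x₂ ∈ span F {x₁, x₂} := subset_span (by simp)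
  have hx₁₂ : x₁ + x₂ ≠ 0 := fun h0 => one_ne_zero
    (LinearIndependent.pair_iff.1 hx 1 1 (by rwa [one_smul, one_smul])).1
  obtain ⟨l₁, hl₁, h₁⟩ := exists_smul_mem_of_projPoints_subset h hx₁ (hx.ne_zero 0)
  obtain ⟨l₂, hl₂, h₂⟩ := exists_smul_mem_of_projPoints_subset h hx₂ (hx.ne_zero 1)
  obtain ⟨l₃, hl₃, h₃⟩ := exists_smul_mem_of_projPoints_subset h (add_mem hx₁ hx₂) hx₁₂
  set W := span K ({x₁, x₂} : Set E)
  set U := V ⊓ W.restrictScalars F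
  have : FiniteDimensional F U := finiteDimensional_of_le inf_le_left
  have hU : finrank F U ≤ 2 :=
    (finrank_inf_restrictScalars_le hspan hV W).trans (finrank_span_pair hx).le
  have hxW₁ : x₁ ∈ W := subset_span (by simp)
  have hxW₂ : x₂ ∈ W := subset_span (by simp)
  have hli : LinearIndependent F ![l₁ • x₁, l₂ • x₂] :=
    (hx.pair_smul hl₁ hl₂).restrict_scalars' F
  have hUeq : span F {l₁ • x₁, l₂ • x₂} = U := by
    refine eq_of_le_of_finrank_le (span_le.2 ?_) (by rwa [finrank_span_pair hli])
    rintro y (rfl | rfl)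
    exacts [⟨h₁, smul_mem W _ hxW₁⟩, ⟨h₂, smul_mem W _ hxW₂⟩]
  have h₃U : l₃ • (x₁ + x₂) ∈ U := ⟨h₃, smul_mem W _ (add_mem hxW₁ hxW₂)⟩
  obtain ⟨a, b, hab⟩ := mem_span_pair.1 (hUeq ▸ h₃U)
  rw [← algebraMap_smul K a, ← algebraMap_smul K b, smul_smul, smul_smul, smul_add] at hab
  obtain ⟨ha, hb⟩ := hx.eq_of_pair hab
  refine ⟨l₃, hl₃, ?_⟩
  rw [smul_span_pair, span_le, Set.insert_subset_iff, Set.singleton_subset_iff]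
  constructor
  · rw [← ha, mul_smul, algebraMap_smul]
    exact smul_mem V a h₁
  · rw [← hb, mul_smul, algebraMap_smul]
    exact smul_mem V b h₂

theorem exists_smul_sup_le {V : Submodule F E} [FiniteDimensional F V]
    (hspan : span K (V : Set E) = ⊤) (hV : finrank F V ≤ finrank K E)
    {x₁ x₂ y₁ y₂ : E} (hx : LinearIndependent K ![x₁, x₂]) (hy : LinearIndependent K ![y₁, y₂])
    {w : E} (hw : w ∈ span F {x₁, x₂} ⊓ span F {y₁, y₂}) (hw0 : w ≠ 0)
    (h : projPoints K (span F {x₁, x₂}) ∪ projPoints K (span F {y₁, y₂}) ⊆ projPoints K V) :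
    ∃ μ : K, μ ≠ 0 ∧ μ • (span F {x₁, x₂} ⊔ span F {y₁, y₂}) ≤ V := by
  obtain ⟨μ, hμ, hμV⟩ := exists_smul_span_pair_le hspan hV hx (Set.union_subset_iff.1 h).1
  obtain ⟨ν, hν, hνV⟩ := exists_smul_span_pair_le hspan hV hy (Set.union_subset_iff.1 h).2
  obtain ⟨c, rfl⟩ := exists_algebraMap_mul_eq_of_smul_mem hspan hV hw0 hν
    (hνV (smul_mem_pointwise_smul _ _ _ hw.2)) (hμV (smul_mem_pointwise_smul _ _ _ hw.1))
  refine ⟨_, hμ, ?_⟩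
  rw [smul_sup']
  refine sup_le hμV fun z hz => ?_
  obtain ⟨u, hu, rfl⟩ := (mem_smul_pointwise_iff_exists _ _ _).1 hz
  rw [mul_smul, algebraMap_smul]
  exact smul_mem V c (hνV (smul_mem_pointwise_smul _ _ _ hu))

end Forms

section Baer

variable {F K : Type*} [Field F] [Field K] [Algebra F K]

theorem isBaerSubplane_iff_exists_linearEquiv {B : Set (Projectivization K (Fin 3 → K))} :
    IsBaerSubplane F B ↔ ∃ g : (Fin 3 → K) ≃ₗ[K] (Fin 3 → K), B = projPoints K
      (LinearMap.range ((g.restrictScalars F).toLinearMap ∘ₗ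
        LinearMap.compLeft (Algebra.linearMap F K) (Fin 3))) := by
  refine exists_congr fun g => ?_
  have hinj : Function.Injective ((g.restrictScalars F).toLinearMap ∘ₗ
      LinearMap.compLeft (Algebra.linearMap F K) (Fin 3)) :=
    g.injective.comp (algebraMap F K).injective.comp_left
  rw [projPoints_range hinj]
  rfl

theorem isBaerSubplane_iff {B : Set (Projectivization K (Fin 3 → K))} :
    IsBaerSubplane F B ↔ ∃ V : Submodule F (Fin 3 → K),
      finrank F V = 3 ∧ span K (V : Set (Fin 3 → K)) = ⊤ ∧ B = projPoints K V := by
  rw [isBaerSubplane_iff_exists_linearEquiv]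
  set ι := LinearMap.compLeft (Algebra.linearMap F K) (Fin 3)
  constructor
  · rintro ⟨g, rfl⟩
    refine ⟨_, ?_, ?_, rfl⟩
    · rw [LinearMap.finrank_range_of_inj (f := (g.restrictScalars F).toLinearMap ∘ₗ ι)
        (g.injective.comp (algebraMap F K).injective.comp_left), finrank_fin_fun]
    · have hι : span K (LinearMap.range ι : Set (Fin 3 → K)) = ⊤ := by
        refine eq_top_iff.2 ((Pi.basisFun K (Fin 3)).span_eq.ge.trans (span_mono ?_))
        rintro _ ⟨i, rfl⟩
        refine ⟨Pi.single i 1, funext fun j => ?_⟩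
        by_cases hij : j = i <;> simp [ι, hij]
      have himage : (LinearMap.range ((g.restrictScalars F).toLinearMap ∘ₗ ι) : Set (Fin 3 → K)) =
          g '' LinearMap.range ι := by
        rw [LinearMap.range_comp, map_coe]
        rfl
      rw [himage, span_image_linearEquiv, hι, Submodule.map_top, LinearEquiv.range]
  · rintro ⟨V, hV, hspan, rfl⟩
    have : FiniteDimensional F V := .of_finrank_pos (by omega)
    let b := finBasisOfFinrankEq F V hV
    have hc : span K (Set.range (V.subtype ∘ b)) = ⊤ := by
      rw [← span_span_of_tower F K, Set.range_comp, span_image, b.span_eq, map_subtype_top,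
        hspan]
    let bK := basisOfTopLeSpanOfCardEqFinrank (V.subtype ∘ b) hc.ge (by simp)
    refine ⟨bK.equivFun.symm, congrArg _ ?_⟩
    have hcomp : (bK.equivFun.symm.restrictScalars F).toLinearMap ∘ₗ ι =
        V.subtype ∘ₗ b.equivFun.symm.toLinearMap := by
      refine LinearMap.ext fun v => ?_
      simp [ι, bK, Basis.equivFun_symm_apply, algebraMap_smul]
    rw [hcomp, LinearMap.range_comp, LinearEquiv.range, map_subtype_top]

theorem IsBaerSubline.exists_eq_projPoints_span_pair {B : Set (Projectivization K (Fin 3 → K))}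
    (h : IsBaerSubline F B) : ∃ x₁ x₂ : Fin 3 → K,
      LinearIndependent K ![x₁, x₂] ∧ B = projPoints K (span F {x₁, x₂}) := by
  obtain ⟨g, rfl⟩ := h
  have hx : LinearIndependent K ![g ![1, 0, 0], g ![0, 1, 0]] := by
    refine LinearIndependent.pair_iff.2 fun s t hst => ?_
    rw [← map_smul, ← map_smul, ← map_add, map_eq_zero_iff g g.injective] at hst
    exact ⟨by simpa using congrFun hst 0, by simpa using congrFun hst 1⟩
  refine ⟨_, _, hx, ?_⟩
  rw [← Matrix.range_cons_cons_empty, ← Fintype.range_linearCombination,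
    projPoints_range (hx.restrict_scalars' F).fintypeLinearCombination_injective]
  have hcoord : ∀ v : Fin 2 → F, g ![algebraMap F K (v 0), algebraMap F K (v 1), 0] =
      Fintype.linearCombination F ![g ![1, 0, 0], g ![0, 1, 0]] v := by
    intro v
    rw [Fintype.linearCombination_apply, Fin.sum_univ_two, ← algebraMap_smul K (v 0),
      ← algebraMap_smul K (v 1)]
    simp only [Matrix.cons_val_zero, Matrix.cons_val_one, ← map_smul, ← map_add]
    congr 1
    ext i
    fin_cases i <;> simp [Algebra.smul_def]
  simp_rw [hcoord]

theorem IsBaerSubline.exists_eq_projPoints_span_pair_of_mem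
    {B : Set (Projectivization K (Fin 3 → K))} (h : IsBaerSubline F B) {P} (hP : P ∈ B) :
    ∃ x₁ x₂ : Fin 3 → K, LinearIndependent K ![x₁, x₂] ∧
      B = projPoints K (span F {x₁, x₂}) ∧ P.rep ∈ span F {x₁, x₂} := by
  obtain ⟨y₁, y₂, hy, rfl⟩ := h.exists_eq_projPoints_span_pair
  obtain ⟨w, hw, -, hPw⟩ := hP
  have hrep : P.rep ∈ K ∙ w := hPw ▸ P.submodule_eq ▸ mem_span_singleton_self P.rep
  obtain ⟨κ, hκ⟩ := mem_span_singleton.1 hrep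
  have hκ0 : κ ≠ 0 := by
    rintro rfl
    exact P.rep_nonzero (by rw [← hκ, zero_smul])
  refine ⟨κ • y₁, κ • y₂, hy.pair_smul hκ0 hκ0, ?_, ?_⟩
  · rw [← smul_span_pair, projPoints_smul hκ0]
  · rw [← smul_span_pair, ← hκ]
    exact smul_mem_pointwise_smul _ _ _ hw

end Baer

theorem stmt17_general {F K : Type*} [Field F] [Field K] [Algebra F K]
    (B₁ B₂ : Set (Projectivization K (Fin 3 → K)))
    (h₁ : IsBaerSubline F B₁) (h₂ : IsBaerSubline F B₂)
    (hcommon : ∃ P, P ∈ B₁ ∩ B₂)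
    (hnoline : ¬ ∃ W : Submodule K (Fin 3 → K), Module.finrank K W = 2 ∧
      ∀ p, p ∈ B₁ ∪ B₂ → p.submodule ≤ W) :
    ∃! B : Set (Projectivization K (Fin 3 → K)),
      IsBaerSubplane F B ∧ B₁ ∪ B₂ ⊆ B := by
  obtain ⟨P, hP₁, hP₂⟩ := hcommon
  obtain ⟨x₁, x₂, hx, rfl, hPx⟩ := h₁.exists_eq_projPoints_span_pair_of_mem hP₁
  obtain ⟨y₁, y₂, hy, rfl, hPy⟩ := h₂.exists_eq_projPoints_span_pair_of_mem hP₂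
  set L := span F {x₁, x₂} ⊔ span F {y₁, y₂}
  have hsub : projPoints K (span F {x₁, x₂}) ∪ projPoints K (span F {y₁, y₂}) ⊆ projPoints K L :=
    Set.union_subset (projPoints_mono le_sup_left) (projPoints_mono le_sup_right)
  have hspan : span K (L : Set (Fin 3 → K)) = ⊤ := by
    by_contra hne
    exact hnoline ⟨_, finrank_eq_two_of_ne_top (finrank_fin_fun K) hne hx
      (span_mono (subset_span.trans (SetLike.coe_subset_coe.2 le_sup_left))),
      fun p hp => submodule_le_span_of_mem_projPoints (hsub hp)⟩
  have hL : finrank F L = 3 := finrank_sup_eq_three (finrank_span_pair (hx.restrict_scalars' F))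
    (finrank_span_pair (hy.restrict_scalars' F)) ((Submodule.ne_bot_iff _).2 ⟨P.rep, ⟨hPx, hPy⟩,
      P.rep_nonzero⟩) hspan (finrank_fin_fun K)
  refine ⟨projPoints K L, ⟨isBaerSubplane_iff.2 ⟨L, hL, hspan, rfl⟩, hsub⟩, ?_⟩
  rintro B ⟨hB, hB₁₂⟩
  obtain ⟨V, hV, hVspan, rfl⟩ := isBaerSubplane_iff.1 hB
  have : FiniteDimensional F V := .of_finrank_pos (by omega)
  obtain ⟨μ, hμ, hμV⟩ :=
    exists_smul_sup_le hVspan (by rw [hV, finrank_fin_fun]) hx hy ⟨hPx, hPy⟩ P.rep_nonzero hB₁₂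
  exact projPoints_eq_of_smul_le (hV.trans hL.symm).le hμ hμV

/-- Two distinct Baer sublines of `PG(2,q²)` having a common point and not contained
in a common line are contained in a unique Baer subplane. -/
theorem stmt17 {F K : Type*} [Field F] [Field K] [Algebra F K]
    [Fintype F] [Fintype K] (q : ℕ)
    (hF : Fintype.card F = q) (hK : Fintype.card K = q ^ 2)
    (B₁ B₂ : Set (Projectivization K (Fin 3 → K)))
    (h₁ : IsBaerSubline F B₁) (h₂ : IsBaerSubline F B₂) (hne : B₁ ≠ B₂)
    (hcommon : ∃ P, P ∈ B₁ ∩ B₂)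
    (hnoline : ¬ ∃ W : Submodule K (Fin 3 → K), Module.finrank K W = 2 ∧
      ∀ p, p ∈ B₁ ∪ B₂ → p.submodule ≤ W) :
    ∃! B : Set (Projectivization K (Fin 3 → K)),
      IsBaerSubplane F B ∧ B₁ ∪ B₂ ⊆ B :=
  stmt17_general B₁ B₂ h₁ h₂ hcommon hnoline
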